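/- An ortholattice satisfying the condition (a →₀ b = 1 ⟺ a ≤ b), where a →₀ b := a' ∪ b, is distributive, i.e., is a Boolean algebra. -/

import Mathlib

/-- An ortholattice as an algebra ⟨α, ', ∪, ∩⟩ with join `j` and
orthocomplement `c` primitive, and meet defined by De Morgan. -/
structure OrthoLattice (α : Type*) where
  j : α → α → α
  c : α → α
  j_comm : ∀ a b, j a b = j b a
  j_assoc : ∀ a b d, j (j a b) d = j a (j b d)
  c_invol : ∀ a, c (c a) = a
  j_top : ∀ a b, j a (j b (c b)) = j b (c b)
  absorb : ∀ a b, j a (c (j (c a) (c b))) = a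

namespace OrthoLattice

variable {α : Type*}

/-- meet: a ∩ b = (a' ∪ b')' -/
def m (L : OrthoLattice α) (a b : α) : α := L.c (L.j (L.c a) (L.c b))

/-- the unit 1 = a ∪ a' -/
def one (L : OrthoLattice α) (a : α) : α := L.j a (L.c a)

/-- quantum equivalence a ≡ b = (a∩b) ∪ (a'∩b') -/
def equiv (L : OrthoLattice α) (a b : α) : α := L.j (L.m a b) (L.m (L.c a) (L.c b))

/-- classical equivalence a ≡₀ b = (a'∪b) ∩ (a∪b') -/
def equiv0 (L : OrthoLattice α) (a b : α) : α := L.m (L.j (L.c a) b) (L.j a (L.c b))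

/-- Sasaki hook a →₁ b = a' ∪ (a ∩ b) -/
def sasaki (L : OrthoLattice α) (a b : α) : α := L.j (L.c a) (L.m a b)

end OrthoLattice

/-!
The hypothesis forces the law `a ∪ (a' ∩ b) = a ∪ b`: indeed `b ≤ a ∪ (a' ∩ b)`, since
`b' ∪ a ∪ (a' ∩ b) = (a ∪ b') ∪ (a ∪ b')' = 1`. With this law, `x ≤ y` and `x' ∩ y = 0` force
`y = x ∪ (x' ∩ y) = x`. Apply this to `x = (a ∩ b) ∪ (a ∩ d) ≤ y = a ∩ (b ∪ d)`: the dual law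
`a ∩ (a' ∪ b) = a ∩ b` gives `a ∩ x' = a ∩ (b ∪ d)'`, hence `x' ∩ y = 0`.
-/

namespace OrthoLattice

variable {α : Type*} (L : OrthoLattice α)

instance : Std.Commutative L.j := ⟨L.j_comm⟩
instance : Std.Associative L.j := ⟨L.j_assoc⟩

theorem m_comm (a b : α) : L.m a b = L.m b a := by
  unfold m; rw [L.j_comm]

theorem m_assoc (a b d : α) : L.m (L.m a b) d = L.m a (L.m b d) := by
  unfold m; rw [L.c_invol, L.c_invol, L.j_assoc]

instance : Std.Commutative L.m := ⟨L.m_comm⟩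
instance : Std.Associative L.m := ⟨L.m_assoc⟩

theorem c_j (a b : α) : L.c (L.j a b) = L.m (L.c a) (L.c b) := by
  unfold m; rw [L.c_invol, L.c_invol]

theorem c_m (a b : α) : L.c (L.m a b) = L.j (L.c a) (L.c b) := by
  unfold m; rw [L.c_invol]

theorem j_m_self (a b : α) : L.j a (L.m a b) = a := L.absorb a b

theorem m_j_self (a b : α) : L.m a (L.j a b) = a := by
  show L.c (L.j (L.c a) (L.c (L.j a b))) = a
  rw [L.c_j a b, j_m_self, L.c_invol]

theorem j_self (a : α) : L.j a a = a := by
  simpa only [m_j_self] using L.j_m_self a (L.j a a)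

theorem m_self (a : α) : L.m a a = a := by
  unfold m; rw [j_self, L.c_invol]

theorem m_m_distrib_left (a b d : α) : L.m a (L.m b d) = L.m (L.m a b) (L.m a d) := by
  calc L.m a (L.m b d) = L.m (L.m a a) (L.m b d) := by rw [m_self]
    _ = L.m (L.m a b) (L.m a d) := by ac_rfl

theorem one_eq (a b : α) : L.one a = L.one b := by
  calc L.one a = L.j (L.one b) (L.one a) := (L.j_top (L.one b) a).symm
    _ = L.j (L.one a) (L.one b) := L.j_comm _ _
    _ = L.one b := L.j_top (L.one a) b

theorem m_c_self_eq (a b : α) : L.m a (L.c a) = L.m b (L.c b) := by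
  show L.c (L.one (L.c a)) = L.c (L.one (L.c b))
  rw [L.one_eq (L.c a) (L.c b)]

theorem m_m_c_self (a b : α) : L.m a (L.m b (L.c b)) = L.m b (L.c b) := by
  rw [L.m_c_self_eq b a, ← m_assoc, m_self]

theorem j_eq_of_m_eq {x y : α} (hxy : L.m x y = x) : L.j x y = y := by
  rw [← hxy, L.j_comm, m_comm, j_m_self]

theorem m_eq_of_j_eq {x y : α} (hxy : L.j x y = y) : L.m x y = x := by
  rw [← hxy, m_j_self]

theorem j_m_m_le_m_j (a b d : α) :
    L.m (L.j (L.m a b) (L.m a d)) (L.m a (L.j b d)) = L.j (L.m a b) (L.m a d) := by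
  have hb : L.j (L.m a b) (L.m a (L.j b d)) = L.m a (L.j b d) := L.j_eq_of_m_eq <| by
    calc L.m (L.m a b) (L.m a (L.j b d)) = L.m (L.m a a) (L.m b (L.j b d)) := by ac_rfl
      _ = L.m a b := by rw [m_self, m_j_self]
  have hd : L.j (L.m a d) (L.m a (L.j b d)) = L.m a (L.j b d) := L.j_eq_of_m_eq <| by
    calc L.m (L.m a d) (L.m a (L.j b d)) = L.m (L.m a a) (L.m d (L.j d b)) := by ac_rfl
      _ = L.m a d := by rw [m_self, m_j_self]
  exact L.m_eq_of_j_eq (by rw [L.j_assoc, hd, hb])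

section ImpOneIffLe

variable (h : ∀ a b : α, L.j (L.c a) b = L.one a ↔ L.m a b = a)
include h

theorem j_m_c_self (a b : α) : L.j a (L.m (L.c a) b) = L.j a b := by
  have hb : L.m b (L.j a (L.m (L.c a) b)) = b := by
    refine (h b _).mp ?_
    rw [← L.j_assoc, L.j_comm (L.c b), ← L.c_invol b, ← L.c_j, L.c_invol]
    exact L.one_eq _ _
  calc L.j a (L.m (L.c a) b) = L.j (L.j a (L.m (L.c a) b)) b := by
        rw [L.j_comm _ b, L.j_eq_of_m_eq hb]
    _ = L.j a (L.j b (L.m b (L.c a))) := by rw [L.m_comm (L.c a)]; ac_rfl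
    _ = L.j a b := by rw [j_m_self]

theorem m_j_c_self (a b : α) : L.m a (L.j (L.c a) b) = L.m a b := by
  have hdual := L.j_m_c_self h (L.c a) (L.c b)
  rw [L.c_invol] at hdual
  calc L.m a (L.j (L.c a) b) = L.c (L.j (L.c a) (L.m a (L.c b))) := by
        rw [m, L.c_j (L.c a) b, L.c_invol]
    _ = L.m a b := by rw [hdual]; rfl

theorem eq_of_m_eq_of_c_m_eq {x y : α} (hxy : L.m x y = x) (h0 : L.m (L.c x) y = L.m x (L.c x)) :
    x = y := by
  calc x = L.j x (L.m x (L.c x)) := (L.j_m_self x _).symm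
    _ = L.j x (L.m (L.c x) y) := by rw [h0]
    _ = y := by rw [L.j_m_c_self h, L.j_eq_of_m_eq hxy]

theorem m_c_j_m_m (a b d : α) :
    L.m a (L.c (L.j (L.m a b) (L.m a d))) = L.m a (L.c (L.j b d)) := by
  rw [c_j, c_m, c_m, m_m_distrib_left, L.m_j_c_self h, L.m_j_c_self h, ← m_m_distrib_left, c_j]

end ImpOneIffLe

end OrthoLattice

/-- an ortholattice satisfying (a →₀ b = 1 ⟺ a ≤ b) is
distributive, i.e. a Boolean algebra. -/
theorem stmt7 {α : Type*} (L : OrthoLattice α)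
    (h : ∀ a b : α, L.j (L.c a) b = L.one a ↔ L.m a b = a) :
    ∀ a b d : α, L.m a (L.j b d) = L.j (L.m a b) (L.m a d) := by
  intro a b d
  have hzero : L.m (L.c (L.j (L.m a b) (L.m a d))) (L.m a (L.j b d))
      = L.m (L.j (L.m a b) (L.m a d)) (L.c (L.j (L.m a b) (L.m a d))) := by
    calc _ = L.m (L.m a (L.c (L.j (L.m a b) (L.m a d)))) (L.j b d) := by
          rw [← L.m_assoc, L.m_comm (L.c _)]
      _ = L.m a (L.m (L.j b d) (L.c (L.j b d))) := by
          rw [L.m_c_j_m_m h, L.m_assoc, L.m_comm (L.c _)]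
      _ = _ := by rw [L.m_m_c_self, L.m_c_self_eq]
  exact (L.eq_of_m_eq_of_c_m_eq h (L.j_m_m_le_m_j a b d) hzero).symm
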